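/- Let F be a non-archimedean local field of characteristic zero and let a ∈ F be nonzero. If for every y ∈ F and every z ∈ F^× the element z² − a·y² is a square in F, then −a is a square in F. -/

import Mathlib

/-! The hypothesis at `(y, z) = (1, z)` and at `(y, z) = (z, a)` makes `z² - a` and
`a² - a z² = -a (z² - a)` squares; if `z² ≠ a` their quotient shows that `-a` is a square.
In characteristic zero one of `z = 1, 2` has `z² ≠ a`. -/

theorem isSquare_neg_of_isSquare_sq_sub {F : Type*} [Field F] {a z : F} (hza : z ^ 2 ≠ a)
    (h₁ : IsSquare (z ^ 2 - a)) (h₂ : IsSquare (a ^ 2 - a * z ^ 2)) : IsSquare (-a) := by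
  have hne : z ^ 2 - a ≠ 0 := sub_ne_zero.mpr hza
  have hquot : -a = (z ^ 2 - a) * (a ^ 2 - a * z ^ 2) / (z ^ 2 - a) ^ 2 := by
    field_simp
    ring
  rw [hquot]
  exact (h₁.mul h₂).div (.sq _)

theorem exists_ne_zero_sq_ne {R : Type*} [Semiring R] [CharZero R] (a : R) :
    ∃ z : R, z ≠ 0 ∧ z ^ 2 ≠ a := by
  by_cases h₁ : (1 : R) ^ 2 = a
  · refine ⟨2, two_ne_zero, fun h₂ => ?_⟩
    rw [← h₁] at h₂
    norm_num at h₂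
  · exact ⟨1, one_ne_zero, h₁⟩

theorem stmt_7_general (p : ℕ) [Fact p.Prime] (F : Type) [Field F]
    [Algebra ℚ_[p] F]
    (a : F) (ha : a ≠ 0)
    (h : ∀ y : F, ∀ z : F, z ≠ 0 → ∃ u : F, z ^ 2 - a * y ^ 2 = u ^ 2) :
    ∃ u : F, -a = u ^ 2 := by
  have : CharZero F := charZero_of_injective_algebraMap (algebraMap ℚ_[p] F).injective
  obtain ⟨z, hz, hza⟩ := exists_ne_zero_sq_ne a
  obtain ⟨s, hs⟩ := h 1 z hz
  obtain ⟨r, hr⟩ := h z a ha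
  have h₁ : IsSquare (z ^ 2 - a) := ⟨s, by rw [← sq, ← hs, one_pow, mul_one]⟩
  have h₂ : IsSquare (a ^ 2 - a * z ^ 2) := ⟨r, by rw [← sq, ← hr]⟩
  obtain ⟨u, hu⟩ := isSquare_neg_of_isSquare_sq_sub hza h₁ h₂
  exact ⟨u, hu.trans (sq u).symm⟩

/-- Let `F` be a non-archimedean local field of characteristic zero
(a finite extension of `ℚ_p`) and `a ∈ F` nonzero.  If `z ^ 2 - a * y ^ 2` is a square in
`F` for every `y ∈ F` and every nonzero `z ∈ F`, then `-a` is a square in `F`. -/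
theorem stmt_7 (p : ℕ) [Fact p.Prime] (F : Type) [Field F]
    [Algebra ℚ_[p] F] [FiniteDimensional ℚ_[p] F]
    (a : F) (ha : a ≠ 0)
    (h : ∀ y : F, ∀ z : F, z ≠ 0 → ∃ u : F, z ^ 2 - a * y ^ 2 = u ^ 2) :
    ∃ u : F, -a = u ^ 2 :=
  stmt_7_general p F a ha h
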